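/- Let C be a perfect code of covering radius one in H(n,q) and C' a perfect code of covering radius one in H(n',q'), with n(q−1) = n'(q'−1). Then C × C' is a completely regular code in the product graph H(n,q) × H(n',q') with covering radius 2 and intersection numbers γ_1 = 1, γ_2 = 2, β_0 = 2n(q−1), β_1 = n(q−1), α_0 = 0, α_1 = n(q−1) − 1, α_2 = 2n(q−1) − 2. -/

import Mathlib

/-! The distance from `(x, x')` to `C × C'` in `G □ H` is `d(x, C) + d(x', C')`, and for perfect
codes of covering radius one each summand is `0` or `1`. A neighbour of `(x, x')` moves exactly one
coordinate, and in a `k`-regular graph a vertex at distance `a ∈ {0, 1}` from a perfect code has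
`a` neighbours in the code and `k - a` outside it. So the number of neighbours of `(x, x')` in each
cell depends only on the unordered pair `{d(x, C), d(x', C')}` (this needs both graphs to have the
same degree `k = n(q-1) = n'(q'-1)`), and a pair of `0/1` entries is determined up to order by its
sum, which is the cell index. -/

open SimpleGraph

/-- The Hamming graph on `Fin n → Q`: words adjacent iff they differ in one coordinate. -/
def hammingGraph (n : ℕ) (Q : Type*) [DecidableEq Q] : SimpleGraph (Fin n → Q) where
  Adj x y := hammingDist x y = 1
  symm := ⟨fun x y (h : hammingDist x y = 1) => by show hammingDist y x = 1; rwa [hammingDist_comm]⟩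
  loopless := ⟨fun x (h : hammingDist x x = 1) => by rw [hammingDist_self] at h; exact absurd h.symm one_ne_zero⟩

/-- Distance from a vertex to a code, via graph distance. -/
noncomputable def distToCode {V : Type*} (G : SimpleGraph V) (C : Set V) (x : V) : ℕ :=
  sInf {d | ∃ c ∈ C, G.dist x c = d}

/-- The `i`-th cell of the distance partition of a code. -/
noncomputable def codeCell {V : Type*} (G : SimpleGraph V) (C : Set V) (i : ℕ) : Set V :=
  {x | distToCode G C x = i}

/-- The number of neighbors of `x` lying in `S`. -/
noncomputable def nbrCount {V : Type*} (G : SimpleGraph V) (x : V) (S : Set V) : ℕ :=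
  (G.neighborSet x ∩ S).ncard

/-- Covering radius of a code. -/
noncomputable def covRad {V : Type*} (G : SimpleGraph V) (C : Set V) : ℕ :=
  sSup {d | ∃ x, distToCode G C x = d}

/-- A code is completely regular if its distance partition is equitable. -/
def IsCompRegCode {V : Type*} (G : SimpleGraph V) (C : Set V) : Prop :=
  ∀ i j : ℕ, ∀ x ∈ codeCell G C i, ∀ y ∈ codeCell G C i,
    nbrCount G x (codeCell G C j) = nbrCount G y (codeCell G C j)

/-- Intersection numbers `γ, α, β` of a code with covering radius `ρ`. -/
def HasIntNums {V : Type*} (G : SimpleGraph V) (C : Set V) (ρ : ℕ) (γ α β : ℕ → ℕ) : Prop :=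
  γ 0 = 0 ∧ β ρ = 0 ∧
  ∀ i ≤ ρ, ∀ x ∈ codeCell G C i,
    (1 ≤ i → nbrCount G x (codeCell G C (i-1)) = γ i) ∧
    nbrCount G x (codeCell G C i) = α i ∧
    (i < ρ → nbrCount G x (codeCell G C (i+1)) = β i)

/-- Equitable partition of the vertex set of a graph. -/
def IsEquitable {V : Type*} (G : SimpleGraph V) (Pa : Set (Set V)) : Prop :=
  ∀ P ∈ Pa, ∀ P' ∈ Pa, ∀ x ∈ P, ∀ y ∈ P, nbrCount G x P' = nbrCount G y P'

/-- Quotient graph of a graph by a partition of its vertex set. -/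
def quotientGraph {V : Type*} (G : SimpleGraph V) (Pa : Set (Set V)) : SimpleGraph Pa where
  Adj P P' := P ≠ P' ∧ ∃ x ∈ (P : Set V), ∃ y ∈ (P' : Set V), G.Adj x y
  symm := ⟨by
    rintro P P' ⟨hne, x, hx, y, hy, hxy⟩
    exact ⟨hne.symm, y, hy, x, hx, hxy.symm⟩⟩
  loopless := ⟨by rintro P ⟨hne, -⟩; exact hne rfl⟩

/-- Completely regular partition with common intersection numbers. -/
def IsCompRegPartition {V : Type*} (G : SimpleGraph V) (Pa : Set (Set V))
    (ρ : ℕ) (γ α β : ℕ → ℕ) : Prop :=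
  Setoid.IsPartition Pa ∧ IsEquitable G Pa ∧
    ∀ P ∈ Pa, IsCompRegCode G P ∧ covRad G P = ρ ∧ HasIntNums G P ρ γ α β

/-- Distance-regular graph of diameter `D` with intersection arrays `b`, `c`. -/
def IsDistRegular {V : Type*} (G : SimpleGraph V) (D : ℕ) (b c : ℕ → ℕ) : Prop :=
  G.Connected ∧ (∀ x y : V, G.dist x y ≤ D) ∧ (∃ x y : V, G.dist x y = D) ∧
  ∀ i ≤ D, ∀ x y : V, G.dist x y = i →
    (1 ≤ i → nbrCount G y {z | G.dist x z = i - 1} = c i) ∧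
    (i < D → nbrCount G y {z | G.dist x z = i + 1} = b i)

/-- The tridiagonal quotient matrix of a completely regular code. -/
noncomputable def quotMatrix (ρ : ℕ) (γ α β : ℕ → ℕ) : Matrix (Fin (ρ+1)) (Fin (ρ+1)) ℝ :=
  Matrix.of fun i j =>
    if (j : ℕ) + 1 = (i : ℕ) then (γ (i : ℕ) : ℝ)
    else if (i : ℕ) = (j : ℕ) then (α (i : ℕ) : ℝ)
    else if (i : ℕ) + 1 = (j : ℕ) then (β (i : ℕ) : ℝ)
    else 0

section Hamming

variable {n : ℕ} {Q : Type*} [DecidableEq Q]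

lemma hammingDist_update_le_one (x : Fin n → Q) (i : Fin n) (a : Q) :
    hammingDist x (Function.update x i a) ≤ 1 := by
  refine (Finset.card_le_card fun j hj => ?_).trans (Finset.card_singleton i).le
  rw [Finset.mem_singleton]
  by_contra hji
  exact (Finset.mem_filter.1 hj).2 (Function.update_of_ne hji a x).symm

lemma hammingDist_le_one_iff {x y : Fin n → Q} :
    hammingDist x y ≤ 1 ↔ x = y ∨ (hammingGraph n Q).Adj x y := by
  rw [Nat.le_one_iff_eq_zero_or_eq_one, hammingDist_eq_zero]
  rfl

lemma hammingDist_eq_one_iff {x y : Fin n → Q} :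
    hammingDist x y = 1 ↔ ∃ i, ∃ a ≠ x i, y = Function.update x i a := by
  constructor
  · intro h
    obtain ⟨i, hi⟩ := Finset.card_eq_one.1 h
    have hdiff : ∀ j, x j ≠ y j ↔ j = i := fun j => by
      simpa using Finset.ext_iff.1 hi j
    refine ⟨i, y i, fun h => (hdiff i).2 rfl h.symm, funext fun j => ?_⟩
    by_cases hj : j = i
    · subst hj
      simp
    · rw [Function.update_of_ne hj]
      exact (not_not.1 (mt (hdiff j).1 hj)).symm
  · rintro ⟨i, a, ha, rfl⟩
    refine le_antisymm (hammingDist_update_le_one x i a) (hammingDist_pos.2 fun h => ha ?_)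
    rw [h, Function.update_self]

lemma hammingGraph_preconnected : (hammingGraph n Q).Preconnected := by
  intro x y
  have key (s : Finset (Fin n)) : (hammingGraph n Q).Reachable x (s.piecewise y x) := by
    induction s using Finset.induction_on with
    | empty => rw [Finset.piecewise_empty]
    | insert i s _ ih =>
      rw [Finset.piecewise_insert]
      refine ih.trans ?_
      rcases hammingDist_le_one_iff.1 (hammingDist_update_le_one (s.piecewise y x) i (y i))
        with h | h
      · rw [← h]
      · exact h.reachable
  simpa using key Finset.univ

lemma hammingGraph_isRegularOfDegree [Fintype Q] [(hammingGraph n Q).LocallyFinite] :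
    (hammingGraph n Q).IsRegularOfDegree (n * (Fintype.card Q - 1)) := by
  intro x
  let f : (Σ i : Fin n, {a : Q // a ≠ x i}) → Fin n → Q := fun p => Function.update x p.1 p.2
  have hf : Function.Injective f := by
    rintro ⟨i, a, ha⟩ ⟨j, b, hb⟩ h
    by_cases hij : i = j
    · subst hij
      have := congrFun h i
      simp_all [f]
    · have := congrFun h i
      simp [f, Function.update_of_ne hij] at this
      exact absurd this ha
  have hrange : (hammingGraph n Q).neighborSet x = Set.range f := by
    ext y
    change hammingDist x y = 1 ↔ _
    rw [hammingDist_eq_one_iff]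
    simp only [f, Set.mem_range, Sigma.exists, Subtype.exists, exists_prop, eq_comm]
  rw [← card_neighborSet_eq_degree, ← Nat.card_eq_fintype_card, hrange,
    Nat.card_range_of_injective hf, Nat.card_eq_fintype_card, Fintype.card_sigma]
  simp

end Hamming

section DistToCode

variable {V W : Type*} {G : SimpleGraph V} {H : SimpleGraph W}

lemma distToCode_le_dist {C : Set V} {x c : V} (hc : c ∈ C) : distToCode G C x ≤ G.dist x c :=
  Nat.sInf_le ⟨c, hc, rfl⟩

lemma exists_dist_eq_distToCode {C : Set V} (hC : C.Nonempty) (x : V) :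
    ∃ c ∈ C, G.dist x c = distToCode G C x :=
  Nat.sInf_mem (hC.image (G.dist x))

lemma distToCode_of_mem {C : Set V} {x : V} (hx : x ∈ C) : distToCode G C x = 0 :=
  Nat.eq_zero_of_le_zero ((distToCode_le_dist hx).trans_eq dist_self)

lemma dist_boxProd {p r : V × W} (h₁ : G.Reachable p.1 r.1) (h₂ : H.Reachable p.2 r.2) :
    (G □ H).dist p r = G.dist p.1 r.1 + H.dist p.2 r.2 := by
  rw [SimpleGraph.dist, edist_boxProd, ENat.toNat_add (edist_ne_top_iff_reachable.2 h₁)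
    (edist_ne_top_iff_reachable.2 h₂)]
  rfl

lemma distToCode_boxProd (hG : G.Preconnected) (hH : H.Preconnected) {C : Set V} {C' : Set W}
    (hC : C.Nonempty) (hC' : C'.Nonempty) (x : V) (x' : W) :
    distToCode (G □ H) (C ×ˢ C') (x, x') = distToCode G C x + distToCode H C' x' := by
  obtain ⟨c, hc, hxc⟩ := exists_dist_eq_distToCode (G := G) hC x
  obtain ⟨c', hc', hxc'⟩ := exists_dist_eq_distToCode (G := H) hC' x'
  refine le_antisymm ?_ (le_csInf ⟨_, (c, c'), Set.mk_mem_prod hc hc', rfl⟩ ?_)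
  · calc distToCode (G □ H) (C ×ˢ C') (x, x') ≤ (G □ H).dist (x, x') (c, c') :=
          distToCode_le_dist (Set.mk_mem_prod hc hc')
      _ = distToCode G C x + distToCode H C' x' := by
          rw [dist_boxProd (hG _ _) (hH _ _), hxc, hxc']
  · rintro _ ⟨⟨a, a'⟩, ⟨ha, ha'⟩, rfl⟩
    rw [dist_boxProd (hG _ _) (hH _ _)]
    exact add_le_add (distToCode_le_dist ha) (distToCode_le_dist ha')

lemma nbrCount_boxProd [G.LocallyFinite] [H.LocallyFinite] (x : V) (x' : W) (S : Set (V × W)) :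
    nbrCount (G □ H) (x, x') S =
      (G.neighborSet x ∩ {y | (y, x') ∈ S}).ncard +
        (H.neighborSet x' ∩ {y' | (x, y') ∈ S}).ncard := by
  have hsplit : (G □ H).neighborSet (x, x') ∩ S =
      (fun y => (y, x')) '' (G.neighborSet x ∩ {y | (y, x') ∈ S}) ∪
        (fun y' => (x, y')) '' (H.neighborSet x' ∩ {y' | (x, y') ∈ S}) := by
    ext ⟨y, y'⟩
    simp only [Set.mem_inter_iff, mem_neighborSet, boxProd_adj, Set.mem_union, Set.mem_image,
      Set.mem_ofPred_eq, Prod.mk.injEq]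
    aesop
  have hdisj : Disjoint ((fun y => (y, x')) '' (G.neighborSet x ∩ {y | (y, x') ∈ S}))
      ((fun y' => (x, y')) '' (H.neighborSet x' ∩ {y' | (x, y') ∈ S})) := by
    rw [Set.disjoint_left]
    rintro _ ⟨y, ⟨hy, -⟩, rfl⟩ ⟨y', -, h⟩
    exact G.ne_of_adj hy (Prod.mk.inj h).1
  rw [nbrCount, hsplit, Set.ncard_union_eq hdisj, Set.ncard_image_of_injective _
    (Prod.mk_left_injective x'), Set.ncard_image_of_injective _ (Prod.mk_right_injective x)]

end DistToCode

def IsPerfectCode {V : Type*} (G : SimpleGraph V) (C : Set V) : Prop :=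
  ∀ x, ∃! c, c ∈ C ∧ (x = c ∨ G.Adj x c)

lemma isPerfectCode_hammingGraph_iff {n : ℕ} {Q : Type*} [DecidableEq Q] {C : Set (Fin n → Q)} :
    IsPerfectCode (hammingGraph n Q) C ↔
      ∀ x, ∃! c, c ∈ C ∧ hammingDist x c ≤ 1 := by
  simp only [hammingDist_le_one_iff, IsPerfectCode]

/-- The number of neighbours `y` with `d(y) + b = j` of a vertex `x` with `d(x) = a`, where `d` is
the distance to a perfect code in a `k`-regular graph. -/
def levelNbrCount (k a b j : ℕ) : ℕ :=
  if j = b then a else if j = b + 1 then k - a else 0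

namespace IsPerfectCode

variable {V : Type*} {G : SimpleGraph V} {C : Set V}

lemma nonempty (hC : IsPerfectCode G C) (x : V) : C.Nonempty :=
  let ⟨c, ⟨hc, _⟩, _⟩ := hC x
  ⟨c, hc⟩

lemma not_adj (hC : IsPerfectCode G C) {x y : V} (hx : x ∈ C) (hy : y ∈ C) : ¬G.Adj x y :=
  fun hxy => G.ne_of_adj hxy ((hC x).unique ⟨hx, .inl rfl⟩ ⟨hy, .inr hxy⟩)

lemma exists_not_mem (hC : IsPerfectCode G C) {x y : V} (hxy : G.Adj x y) : ∃ z, z ∉ C := by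
  by_cases hx : x ∈ C
  · exact ⟨y, fun hy => hC.not_adj hx hy hxy⟩
  · exact ⟨x, hx⟩

lemma distToCode_of_not_mem (hC : IsPerfectCode G C) (hG : G.Preconnected) {x : V} (hx : x ∉ C) :
    distToCode G C x = 1 := by
  obtain ⟨c, ⟨hc, hxc⟩, -⟩ := hC x
  have hadj : G.Adj x c := hxc.resolve_left (by rintro rfl; exact hx hc)
  refine le_antisymm ((distToCode_le_dist hc).trans_eq (dist_eq_one_iff_adj.2 hadj)) ?_
  obtain ⟨c', hc', hxc'⟩ := exists_dist_eq_distToCode (G := G) ⟨c, hc⟩ x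
  exact hxc' ▸ (hG x c').pos_dist_of_ne (by rintro rfl; exact hx hc')

lemma distToCode_le_one (hC : IsPerfectCode G C) (hG : G.Preconnected) (x : V) :
    distToCode G C x ≤ 1 := by
  by_cases hx : x ∈ C
  · exact (distToCode_of_mem hx).trans_le zero_le_one
  · exact (hC.distToCode_of_not_mem hG hx).le

lemma ncard_neighborSet_inter (hC : IsPerfectCode G C) (hG : G.Preconnected) (x : V) :
    (G.neighborSet x ∩ C).ncard = distToCode G C x := by
  by_cases hx : x ∈ C
  · have : G.neighborSet x ∩ C = ∅ :=
      Set.eq_empty_of_forall_notMem fun y hy => hC.not_adj hx hy.2 hy.1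
    rw [distToCode_of_mem hx, this, Set.ncard_empty]
  · obtain ⟨c, ⟨hc, hxc⟩, huniq⟩ := hC x
    have hadj : G.Adj x c := hxc.resolve_left (by rintro rfl; exact hx hc)
    have : G.neighborSet x ∩ C = {c} := Set.eq_singleton_iff_unique_mem.2
      ⟨⟨hadj, hc⟩, fun y hy => huniq y ⟨hy.2, .inr hy.1⟩⟩
    rw [this, Set.ncard_singleton, hC.distToCode_of_not_mem hG hx]

lemma ncard_neighborSet_inter_compl [G.LocallyFinite] (hC : IsPerfectCode G C)
    (hG : G.Preconnected) (x : V) :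
    (G.neighborSet x ∩ Cᶜ).ncard = G.degree x - distToCode G C x := by
  have := Set.ncard_inter_add_ncard_sdiff_eq_ncard (G.neighborSet x) C
  rw [hC.ncard_neighborSet_inter hG, Set.ncard_eq_toFinset_card' (G.neighborSet x),
    ← neighborFinset_def, card_neighborFinset_eq_degree] at this
  rw [← Set.sdiff_eq]
  omega

lemma setOf_distToCode_add_eq (hC : IsPerfectCode G C) (hG : G.Preconnected) (b j : ℕ) :
    {y | distToCode G C y + b = j} = if j = b then C else if j = b + 1 then Cᶜ else ∅ := by
  ext y
  by_cases hy : y ∈ C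
  · simp only [Set.mem_ofPred_eq, distToCode_of_mem hy]
    split_ifs <;> simp only [hy, Set.mem_compl_iff, not_true_eq_false,
      Set.mem_empty_iff_false, iff_true, iff_false] <;> omega
  · simp only [Set.mem_ofPred_eq, hC.distToCode_of_not_mem hG hy]
    split_ifs <;> simp only [hy, Set.mem_compl_iff, not_false_eq_true,
      Set.mem_empty_iff_false, iff_true, iff_false] <;> omega

lemma ncard_neighborSet_inter_setOf_distToCode_add [G.LocallyFinite] (hC : IsPerfectCode G C)
    (hG : G.Preconnected) {k : ℕ} (hk : G.IsRegularOfDegree k) (x : V) (b j : ℕ) :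
    (G.neighborSet x ∩ {y | distToCode G C y + b = j}).ncard =
      levelNbrCount k (distToCode G C x) b j := by
  rw [hC.setOf_distToCode_add_eq hG, levelNbrCount]
  split_ifs
  · exact hC.ncard_neighborSet_inter hG x
  · rw [hC.ncard_neighborSet_inter_compl hG, hk x]
  · rw [Set.inter_empty, Set.ncard_empty]

end IsPerfectCode

lemma levelNbrCount_add_levelNbrCount {k a b : ℕ} (hk : 0 < k) (ha : a ≤ 1) (hb : b ≤ 1) :
    (1 ≤ a + b → levelNbrCount k a b (a + b - 1) + levelNbrCount k b a (a + b - 1) = a + b) ∧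
    levelNbrCount k a b (a + b) + levelNbrCount k b a (a + b) = (a + b) * k - (a + b) ∧
    (a + b < 2 →
      levelNbrCount k a b (a + b + 1) + levelNbrCount k b a (a + b + 1) = (2 - (a + b)) * k) := by
  interval_cases a <;> interval_cases b <;> simp [levelNbrCount] <;> omega

section ProductCode

variable {V W : Type*} {G : SimpleGraph V} {H : SimpleGraph W} {C : Set V} {C' : Set W}

lemma mem_codeCell_boxProd_iff (hG : G.Preconnected) (hH : H.Preconnected)
    (hC : IsPerfectCode G C) (hC' : IsPerfectCode H C') (x : V) (x' : W) (j : ℕ) :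
    (x, x') ∈ codeCell (G □ H) (C ×ˢ C') j ↔ distToCode G C x + distToCode H C' x' = j := by
  rw [codeCell, Set.mem_ofPred_eq, distToCode_boxProd hG hH (hC.nonempty x) (hC'.nonempty x')]

lemma nbrCount_boxProd_codeCell [G.LocallyFinite] [H.LocallyFinite] {k : ℕ}
    (hG : G.Preconnected) (hH : H.Preconnected) (hGk : G.IsRegularOfDegree k)
    (hHk : H.IsRegularOfDegree k) (hC : IsPerfectCode G C) (hC' : IsPerfectCode H C')
    (x : V) (x' : W) (j : ℕ) :
    nbrCount (G □ H) (x, x') (codeCell (G □ H) (C ×ˢ C') j) =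
      levelNbrCount k (distToCode G C x) (distToCode H C' x') j +
        levelNbrCount k (distToCode H C' x') (distToCode G C x) j := by
  have hcell₁ : {y | (y, x') ∈ codeCell (G □ H) (C ×ˢ C') j} =
      {y | distToCode G C y + distToCode H C' x' = j} := by
    ext y
    exact mem_codeCell_boxProd_iff hG hH hC hC' y x' j
  have hcell₂ : {y' | (x, y') ∈ codeCell (G □ H) (C ×ˢ C') j} =
      {y' | distToCode H C' y' + distToCode G C x = j} := by
    ext y'
    rw [Set.mem_ofPred_eq, mem_codeCell_boxProd_iff hG hH hC hC', add_comm]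
    rfl
  rw [nbrCount_boxProd, hcell₁, hcell₂,
    hC.ncard_neighborSet_inter_setOf_distToCode_add hG hGk,
    hC'.ncard_neighborSet_inter_setOf_distToCode_add hH hHk]

lemma isCompRegCode_boxProd [G.LocallyFinite] [H.LocallyFinite] {k : ℕ}
    (hG : G.Preconnected) (hH : H.Preconnected) (hGk : G.IsRegularOfDegree k)
    (hHk : H.IsRegularOfDegree k) (hC : IsPerfectCode G C) (hC' : IsPerfectCode H C') :
    IsCompRegCode (G □ H) (C ×ˢ C') := by
  rintro i j ⟨x, x'⟩ hx ⟨y, y'⟩ hy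
  rw [mem_codeCell_boxProd_iff hG hH hC hC'] at hx hy
  simp only [nbrCount_boxProd_codeCell hG hH hGk hHk hC hC']
  have := hC.distToCode_le_one hG x
  have := hC'.distToCode_le_one hH x'
  have := hC.distToCode_le_one hG y
  have := hC'.distToCode_le_one hH y'
  obtain ⟨h₁, h₂⟩ | ⟨h₁, h₂⟩ : (distToCode G C x = distToCode G C y ∧
      distToCode H C' x' = distToCode H C' y') ∨
      (distToCode G C x = distToCode H C' y' ∧ distToCode H C' x' = distToCode G C y) := by
    omega
  · rw [h₁, h₂]
  · rw [h₁, h₂, add_comm]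

lemma covRad_boxProd [G.LocallyFinite] [H.LocallyFinite] [Nonempty V] [Nonempty W] {k : ℕ}
    (hk : 0 < k) (hG : G.Preconnected) (hH : H.Preconnected) (hGk : G.IsRegularOfDegree k)
    (hHk : H.IsRegularOfDegree k) (hC : IsPerfectCode G C) (hC' : IsPerfectCode H C') :
    covRad (G □ H) (C ×ˢ C') = 2 := by
  obtain ⟨v, hv⟩ := (G.degree_pos_iff_exists_adj (Classical.arbitrary V)).1 (hGk _ ▸ hk)
  obtain ⟨w, hw⟩ := (H.degree_pos_iff_exists_adj (Classical.arbitrary W)).1 (hHk _ ▸ hk)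
  obtain ⟨x, hx⟩ := hC.exists_not_mem hv
  obtain ⟨x', hx'⟩ := hC'.exists_not_mem hw
  refine IsGreatest.csSup_eq ⟨⟨(x, x'), ?_⟩, ?_⟩
  · rw [distToCode_boxProd hG hH (hC.nonempty x) (hC'.nonempty x'),
      hC.distToCode_of_not_mem hG hx, hC'.distToCode_of_not_mem hH hx']
  · rintro _ ⟨⟨y, y'⟩, rfl⟩
    rw [distToCode_boxProd hG hH (hC.nonempty y) (hC'.nonempty y')]
    exact add_le_add (hC.distToCode_le_one hG y) (hC'.distToCode_le_one hH y')

lemma hasIntNums_boxProd [G.LocallyFinite] [H.LocallyFinite] {k : ℕ} (hk : 0 < k)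
    (hG : G.Preconnected) (hH : H.Preconnected) (hGk : G.IsRegularOfDegree k)
    (hHk : H.IsRegularOfDegree k) (hC : IsPerfectCode G C) (hC' : IsPerfectCode H C') :
    HasIntNums (G □ H) (C ×ˢ C') 2
      (fun i => i) (fun i => i * k - i) (fun i => (2 - i) * k) := by
  refine ⟨rfl, by simp, fun i _ ⟨x, x'⟩ hx => ?_⟩
  rw [mem_codeCell_boxProd_iff hG hH hC hC'] at hx
  subst hx
  simp only [nbrCount_boxProd_codeCell hG hH hGk hHk hC hC']
  exact levelNbrCount_add_levelNbrCount hk (hC.distToCode_le_one hG x)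
    (hC'.distToCode_le_one hH x')

end ProductCode

theorem product_of_perfect_codes_general {n q n' q' : ℕ}
    (hn : 1 ≤ n) (hq : 2 ≤ q) (hq' : 2 ≤ q')
    (C : Set (Fin n → Fin q)) (C' : Set (Fin n' → Fin q'))
    (hperf : ∀ x : Fin n → Fin q, ∃! c : Fin n → Fin q, c ∈ C ∧ hammingDist x c ≤ 1)
    (hperf' : ∀ x : Fin n' → Fin q', ∃! c : Fin n' → Fin q', c ∈ C' ∧ hammingDist x c ≤ 1)
    (hbal : n * (q - 1) = n' * (q' - 1)) :
    IsCompRegCode (hammingGraph n (Fin q) □ hammingGraph n' (Fin q')) (C ×ˢ C') ∧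
    covRad (hammingGraph n (Fin q) □ hammingGraph n' (Fin q')) (C ×ˢ C') = 2 ∧
    HasIntNums (hammingGraph n (Fin q) □ hammingGraph n' (Fin q')) (C ×ˢ C') 2
      (fun i => i)
      (fun i => i * (n * (q - 1)) - i)
      (fun i => (2 - i) * (n * (q - 1))) := by
  classical
  have : Nonempty (Fin q) := ⟨⟨0, by omega⟩⟩
  have : Nonempty (Fin q') := ⟨⟨0, by omega⟩⟩
  have hk : 0 < n * (q - 1) := Nat.mul_pos hn (by omega)
  have hGk : (hammingGraph n (Fin q)).IsRegularOfDegree (n * (q - 1)) := by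
    simpa using hammingGraph_isRegularOfDegree (n := n) (Q := Fin q)
  have hHk : (hammingGraph n' (Fin q')).IsRegularOfDegree (n * (q - 1)) := by
    simpa [hbal] using hammingGraph_isRegularOfDegree (n := n') (Q := Fin q')
  have hC := isPerfectCode_hammingGraph_iff.2 hperf
  have hC' := isPerfectCode_hammingGraph_iff.2 hperf'
  have hG := hammingGraph_preconnected (n := n) (Q := Fin q)
  have hH := hammingGraph_preconnected (n := n') (Q := Fin q')
  exact ⟨isCompRegCode_boxProd hG hH hGk hHk hC hC', covRad_boxProd hk hG hH hGk hHk hC hC',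
    hasIntNums_boxProd hk hG hH hGk hHk hC hC'⟩

/-- the product of two perfect codes of covering radius one (with
`n(q-1) = n'(q'-1)`) is completely regular of covering radius 2 with intersection
numbers `γ₁ = 1, γ₂ = 2, β₀ = 2n(q-1), β₁ = n(q-1), α₀ = 0, α₁ = n(q-1)-1,
α₂ = 2n(q-1)-2`. -/
theorem product_of_perfect_codes {n q n' q' : ℕ}
    (hn : 1 ≤ n) (hq : 2 ≤ q) (hn' : 1 ≤ n') (hq' : 2 ≤ q')
    (C : Set (Fin n → Fin q)) (C' : Set (Fin n' → Fin q'))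
    (hδ : ∀ x ∈ C, ∀ y ∈ C, x ≠ y → 3 ≤ hammingDist x y)
    (hperf : ∀ x : Fin n → Fin q, ∃! c : Fin n → Fin q, c ∈ C ∧ hammingDist x c ≤ 1)
    (hδ' : ∀ x ∈ C', ∀ y ∈ C', x ≠ y → 3 ≤ hammingDist x y)
    (hperf' : ∀ x : Fin n' → Fin q', ∃! c : Fin n' → Fin q', c ∈ C' ∧ hammingDist x c ≤ 1)
    (hbal : n * (q - 1) = n' * (q' - 1)) :
    IsCompRegCode (hammingGraph n (Fin q) □ hammingGraph n' (Fin q')) (C ×ˢ C') ∧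
    covRad (hammingGraph n (Fin q) □ hammingGraph n' (Fin q')) (C ×ˢ C') = 2 ∧
    HasIntNums (hammingGraph n (Fin q) □ hammingGraph n' (Fin q')) (C ×ˢ C') 2
      (fun i => i)
      (fun i => i * (n * (q - 1)) - i)
      (fun i => (2 - i) * (n * (q - 1))) :=
  product_of_perfect_codes_general hn hq hq' C C' hperf hperf' hbal
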